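/- arXiv:1107.1535 — 2 statements merged into one kernel-verified Lean document; each statement's English description precedes it below -/
import Mathlib

section
/- Let G be a finite abelian group of order q, H a subgroup of G, M a maximal proper subgroup of H, and q̄ = |H|/|M|. Let T_H be a transversal of H in G, fix t_H ∈ T_H, let T_M be a transversal of M in H, and let W̄ be the induced channel on the q̄ cosets {t_H + t_M + M : t_M ∈ T_M}. Let ε > 0. If Z_d(W) < ε for all d ∈ H \ M, then the average Bhattacharyya parameter of W̄ satisfies Z(W̄) ≤ ( |M|·|H|·|G| / (|H| − |M|) )·ε. -/
/-!
Square root is subadditive, so the Bhattacharyya parameter of two averaged inputs is at most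
the average of the parameters of the underlying pairs:
`Z(W̄_{t,t'}) ≤ (1/|M|) Σ_{m,m' ∈ M} Z(W_{tH+t+m, tH+t'+m'})`. For distinct representatives
`t ≠ t'` every such pair differs by an element of `H \ M`, and a single pair contributes at
most `q · Z_d(W) < q ε` because `Z_d` averages nonnegative terms. So each `Z(W̄_{t,t'})` is at
most `|M| q ε`, and there are at most `(|H|/|M|)²` ordered pairs of representatives.
-/

open Finset

/-- Bhattacharyya distance between two input symbols. -/
noncomputable def Zpair {G Y : Type} [Fintype Y] (W : G → Y → ℝ) (x x' : G) : ℝ :=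
  ∑ y : Y, Real.sqrt (W x y * W x' y)

/-- `Z_d(W) = (1/q)·Σ_{x∈G} Z(W_{x,x+d})`. -/
noncomputable def Zd {G Y : Type} [Fintype G] [Fintype Y] [Add G]
    (W : G → Y → ℝ) (d : G) : ℝ :=
  (1 / (Fintype.card G : ℝ)) * ∑ x : G, Zpair W x (x + d)

/-- The induced channel `W̄` on cosets of `M` inside the coset `t_H + H`, with inputs
represented by elements `t` of a transversal of `M`:
`W̄(y | t_H + t + M) = (1/|M|)·Σ_{m∈M} W(y | t_H + t + m)`. -/
noncomputable def inducedChannel {G Y : Type} [Fintype G] [AddCommGroup G] [DecidableEq G]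
    (W : G → Y → ℝ) (tH : G) (M : AddSubgroup G) [DecidablePred (· ∈ M)] :
    G → Y → ℝ :=
  fun t y => (1 / (Nat.card M : ℝ)) *
    ∑ m ∈ Finset.univ.filter (fun m : G => m ∈ M), W (tH + t + m) y

theorem Real.sqrt_sum_le_sum_sqrt {ι : Type*} {s : Finset ι} {f : ι → ℝ}
    (hf : ∀ i ∈ s, 0 ≤ f i) : √(∑ i ∈ s, f i) ≤ ∑ i ∈ s, √(f i) := by
  refine (Real.sqrt_le_left (sum_nonneg fun i _ => Real.sqrt_nonneg _)).2 ?_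
  calc ∑ i ∈ s, f i = ∑ i ∈ s, √(f i) ^ 2 :=
        sum_congr rfl fun i hi => (Real.sq_sqrt (hf i hi)).symm
    _ ≤ (∑ i ∈ s, √(f i)) ^ 2 := sum_sq_le_sq_sum_of_nonneg fun i _ => Real.sqrt_nonneg _

theorem Real.sqrt_sum_mul_sum_le {ι κ : Type*} {s : Finset ι} {t : Finset κ} {f : ι → ℝ}
    {g : κ → ℝ} (hf : ∀ i ∈ s, 0 ≤ f i) (hg : ∀ j ∈ t, 0 ≤ g j) :
    √((∑ i ∈ s, f i) * ∑ j ∈ t, g j) ≤ ∑ i ∈ s, ∑ j ∈ t, √(f i * g j) := by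
  calc √((∑ i ∈ s, f i) * ∑ j ∈ t, g j) = √(∑ i ∈ s, f i) * √(∑ j ∈ t, g j) :=
        Real.sqrt_mul (sum_nonneg hf) _
    _ ≤ (∑ i ∈ s, √(f i)) * ∑ j ∈ t, √(g j) :=
        mul_le_mul (Real.sqrt_sum_le_sum_sqrt hf) (Real.sqrt_sum_le_sum_sqrt hg)
          (Real.sqrt_nonneg _) (sum_nonneg fun i _ => Real.sqrt_nonneg _)
    _ = ∑ i ∈ s, ∑ j ∈ t, √(f i * g j) := by
        rw [sum_mul_sum]
        exact sum_congr rfl fun i hi => sum_congr rfl fun j _ => (Real.sqrt_mul (hf i hi) _).symm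

theorem Finset.sum_sum_erase_le_card_sq_mul {ι : Type*} [DecidableEq ι] {s : Finset ι}
    {f : ι → ι → ℝ} {B : ℝ} (hB : 0 ≤ B) (hf : ∀ i ∈ s, ∀ j ∈ s, i ≠ j → f i j ≤ B) :
    ∑ i ∈ s, ∑ j ∈ s.erase i, f i j ≤ #s ^ 2 * B := by
  calc ∑ i ∈ s, ∑ j ∈ s.erase i, f i j ≤ ∑ i ∈ s, #s * B := by
        refine sum_le_sum fun i hi => (sum_le_card_nsmul _ _ _ fun j hj =>
          hf i hi j (mem_of_mem_erase hj) (ne_of_mem_erase hj).symm).trans ?_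
        rw [nsmul_eq_mul]
        gcongr
        exact erase_subset i s
    _ = #s ^ 2 * B := by rw [sum_const, nsmul_eq_mul, ← mul_assoc, ← sq]

theorem AddSubgroup.card_filter_mem_eq_natCard {G : Type} [Fintype G] [AddGroup G]
    (K : AddSubgroup G) [DecidablePred (· ∈ K)] : #(univ.filter (· ∈ K)) = Nat.card K := by
  rw [Nat.card_eq_fintype_card, Fintype.card_subtype]

theorem AddSubgroup.natCard_lt_natCard_of_lt {G : Type} [AddGroup G] [Finite G]
    {M H : AddSubgroup G} (h : M < H) : Nat.card M < Nat.card H := by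
  have := Set.ncard_lt_ncard (SetLike.coe_ssubset_coe.2 h) (Set.toFinite (H : Set G))
  rwa [← Nat.card_coe_set_eq, ← Nat.card_coe_set_eq] at this

section Bhattacharyya

variable {G Y : Type} [Fintype Y]

theorem Zpair_nonneg (W : G → Y → ℝ) (x x' : G) : 0 ≤ Zpair W x x' :=
  sum_nonneg fun _ _ => Real.sqrt_nonneg _

theorem Zpair_le_card_mul_Zd [Fintype G] [AddCommGroup G] (W : G → Y → ℝ) (x x' : G) :
    Zpair W x x' ≤ Fintype.card G * Zd W (x' - x) := by
  have hq : (Fintype.card G : ℝ) ≠ 0 := Nat.cast_ne_zero.2 Fintype.card_ne_zero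
  rw [Zd, ← mul_assoc, mul_one_div_cancel hq, one_mul]
  calc Zpair W x x' = Zpair W x (x + (x' - x)) := by rw [add_sub_cancel]
    _ ≤ ∑ z : G, Zpair W z (z + (x' - x)) :=
        single_le_sum (f := fun z => Zpair W z (z + (x' - x)))
          (fun z _ => Zpair_nonneg W z _) (mem_univ x)

theorem Zpair_inducedChannel_le [Fintype G] [AddCommGroup G] [DecidableEq G]
    {W : G → Y → ℝ} (hW0 : ∀ x y, 0 ≤ W x y) {tH : G} {M : AddSubgroup G}
    [DecidablePred (· ∈ M)] {t t' : G} {B : ℝ}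
    (hB : ∀ m ∈ M, ∀ m' ∈ M, Zpair W (tH + t + m) (tH + t' + m') ≤ B) :
    Zpair (inducedChannel W tH M) t t' ≤ Nat.card M * B := by
  set Mf := univ.filter (· ∈ M)
  have hMf : (#Mf : ℝ) = Nat.card M := by rw [AddSubgroup.card_filter_mem_eq_natCard]
  calc Zpair (inducedChannel W tH M) t t'
      ≤ ∑ y : Y, (1 / (Nat.card M : ℝ)) *
          ∑ m ∈ Mf, ∑ m' ∈ Mf, √(W (tH + t + m) y * W (tH + t' + m') y) := by
        refine sum_le_sum fun y _ => ?_
        rw [inducedChannel, inducedChannel, mul_mul_mul_comm,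
          Real.sqrt_mul (mul_self_nonneg _), Real.sqrt_mul_self (by positivity)]
        gcongr
        exact Real.sqrt_sum_mul_sum_le (fun _ _ => hW0 _ _) (fun _ _ => hW0 _ _)
    _ = (1 / (Nat.card M : ℝ)) * ∑ m ∈ Mf, ∑ m' ∈ Mf, Zpair W (tH + t + m) (tH + t' + m') := by
        simp_rw [Zpair, ← mul_sum]
        rw [sum_comm]
        simp_rw [sum_comm (s := univ)]
    _ ≤ (1 / (Nat.card M : ℝ)) * ∑ m ∈ Mf, ∑ m' ∈ Mf, B := by
        gcongr with m hm m' hm'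
        exact hB m (mem_filter.1 hm).2 m' (mem_filter.1 hm').2
    _ = Nat.card M * B := by
        simp only [sum_const, nsmul_eq_mul, hMf]
        field_simp

end Bhattacharyya

section Transversal

variable {G : Type} [AddCommGroup G] {H M : AddSubgroup G} {TM : Finset G}

theorem eq_of_sub_mem_of_transversal (hTMsub : (TM : Set G) ⊆ H)
    (hTM : ∀ h ∈ H, ∃! t, t ∈ TM ∧ h - t ∈ M) {t t' : G} (ht : t ∈ TM) (ht' : t' ∈ TM)
    (hM : t' - t ∈ M) : t = t' := by
  obtain ⟨s, -, hs⟩ := hTM t' (hTMsub ht')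
  exact (hs t ⟨ht, hM⟩).trans (hs t' ⟨ht', by simp⟩).symm

theorem add_sub_add_mem_diff_of_transversal (hMH : M ≤ H) (hTMsub : (TM : Set G) ⊆ H)
    (hTM : ∀ h ∈ H, ∃! t, t ∈ TM ∧ h - t ∈ M) {t t' : G} (ht : t ∈ TM) (ht' : t' ∈ TM)
    (hne : t ≠ t') (a : G) {m m' : G} (hm : m ∈ M) (hm' : m' ∈ M) :
    a + t' + m' - (a + t + m) ∈ (H : Set G) \ M := by
  have hmM : m' - m ∈ M := M.sub_mem hm' hm
  rw [show a + t' + m' - (a + t + m) = t' - t + (m' - m) by abel]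
  refine ⟨H.add_mem (H.sub_mem (hTMsub ht') (hTMsub ht)) (hMH hmM), fun h => hne ?_⟩
  exact eq_of_sub_mem_of_transversal hTMsub hTM ht ht' (by simpa using M.sub_mem h hmM)

theorem card_mul_natCard_le_of_transversal [Fintype G] [DecidablePred (· ∈ M)]
    (hMH : M ≤ H) (hTMsub : (TM : Set G) ⊆ H) (hTM : ∀ h ∈ H, ∃! t, t ∈ TM ∧ h - t ∈ M) :
    #TM * Nat.card M ≤ Nat.card H := by
  classical
  rw [← AddSubgroup.card_filter_mem_eq_natCard, ← AddSubgroup.card_filter_mem_eq_natCard,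
    ← card_product]
  refine card_le_card_of_injOn (fun p => p.1 + p.2) (fun p hp => ?_) fun p hp p' hp' heq => ?_
  · simp only [coe_product, Set.mem_prod, mem_coe, mem_filter, mem_univ, true_and] at hp ⊢
    exact H.add_mem (hTMsub hp.1) (hMH hp.2)
  · simp only [coe_product, Set.mem_prod, mem_coe, mem_filter, mem_univ, true_and] at hp hp' heq
    have ht : p.1 = p'.1 := eq_of_sub_mem_of_transversal hTMsub hTM hp.1 hp'.1 <| by
      rw [show p'.1 - p.1 = p.2 - p'.2 by rw [sub_eq_sub_iff_add_eq_add, ← heq, add_comm]]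
      exact M.sub_mem hp.2 hp'.2
    exact Prod.ext ht (by rw [ht] at heq; exact add_left_cancel heq)

end Transversal

theorem avg_bhattacharyya_inducedChannel_le_general
    {G Y : Type} [Fintype G] [AddCommGroup G] [DecidableEq G] [Fintype Y]
    (W : G → Y → ℝ) (hW0 : ∀ x y, 0 ≤ W x y)
    (H M : AddSubgroup G) [DecidablePred (· ∈ M)]
    (hMH : M < H)
    (tH : G)
    (TM : Finset G) (hTMsub : (TM : Set G) ⊆ (H : Set G))
    (hTM : ∀ h ∈ H, ∃! t, t ∈ TM ∧ h - t ∈ M)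
    (ε : ℝ) (hε : 0 < ε)
    (hZ : ∀ d : G, d ∈ (H : Set G) \ (M : Set G) → Zd W d < ε) :
    (1 / (((Nat.card H : ℝ) / (Nat.card M : ℝ)) *
        ((Nat.card H : ℝ) / (Nat.card M : ℝ) - 1))) *
      ∑ t ∈ TM, ∑ t' ∈ TM.erase t, Zpair (inducedChannel W tH M) t t' ≤
    ((Nat.card M : ℝ) * (Nat.card H : ℝ) * (Fintype.card G : ℝ) /
        ((Nat.card H : ℝ) - (Nat.card M : ℝ))) * ε := by
  have hm : (0 : ℝ) < Nat.card M := Nat.cast_pos.2 Nat.card_pos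
  have hmh : (Nat.card M : ℝ) < Nat.card H :=
    Nat.cast_lt.2 (AddSubgroup.natCard_lt_natCard_of_lt hMH)
  have hTMm : (#TM : ℝ) * Nat.card M ≤ Nat.card H := by
    exact_mod_cast card_mul_natCard_le_of_transversal hMH.le hTMsub hTM
  set m : ℝ := (Nat.card M : ℝ)
  set h : ℝ := (Nat.card H : ℝ)
  set q : ℝ := (Fintype.card G : ℝ)
  have hpair : ∀ t ∈ TM, ∀ t' ∈ TM, t ≠ t' →
      Zpair (inducedChannel W tH M) t t' ≤ m * (q * ε) :=
    fun t ht t' ht' hne => Zpair_inducedChannel_le hW0 fun _ hx _ hx' =>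
      (Zpair_le_card_mul_Zd W _ _).trans <| mul_le_mul_of_nonneg_left
        (hZ _ (add_sub_add_mem_diff_of_transversal hMH.le hTMsub hTM ht ht' hne tH hx hx')).le
        (Nat.cast_nonneg _)
  have hsum := sum_sum_erase_le_card_sq_mul (by positivity) hpair
  have hT : (#TM : ℝ) ^ 2 ≤ (h / m) ^ 2 := by
    gcongr
    exact (le_div_iff₀ hm).2 hTMm
  have hr : 0 < h / m * (h / m - 1) :=
    mul_pos (div_pos (hm.trans hmh) hm) (sub_pos.2 ((one_lt_div hm).2 hmh))
  calc _ ≤ 1 / (h / m * (h / m - 1)) * ((h / m) ^ 2 * (m * (q * ε))) := by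
        gcongr
        exact hsum.trans (mul_le_mul_of_nonneg_right hT (by positivity))
    _ = m * h * q / (h - m) * ε := by
        field_simp

/-- if `Z_d(W) < ε` for all `d ∈ H \ M`, then the average Bhattacharyya
parameter of the induced channel `W̄` is at most `(|M|·|H|·|G|/(|H|−|M|))·ε`. -/
theorem avg_bhattacharyya_inducedChannel_le
    {G Y : Type} [Fintype G] [AddCommGroup G] [DecidableEq G] [Fintype Y]
    (W : G → Y → ℝ) (hW0 : ∀ x y, 0 ≤ W x y) (hW1 : ∀ x, ∑ y, W x y = 1)
    (H M : AddSubgroup G) [DecidablePred (· ∈ M)]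
    (hMH : M < H)
    (hMmax : ∀ K : AddSubgroup G, M ≤ K → K ≤ H → K = M ∨ K = H)
    (TH : Finset G) (hTH : ∀ g : G, ∃! t, t ∈ TH ∧ g - t ∈ H) (tH : G) (htH : tH ∈ TH)
    (TM : Finset G) (hTMsub : (TM : Set G) ⊆ (H : Set G))
    (hTM : ∀ h ∈ H, ∃! t, t ∈ TM ∧ h - t ∈ M)
    (ε : ℝ) (hε : 0 < ε)
    (hZ : ∀ d : G, d ∈ (H : Set G) \ (M : Set G) → Zd W d < ε) :
    (1 / (((Nat.card H : ℝ) / (Nat.card M : ℝ)) *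
        ((Nat.card H : ℝ) / (Nat.card M : ℝ) - 1))) *
      ∑ t ∈ TM, ∑ t' ∈ TM.erase t, Zpair (inducedChannel W tH M) t t' ≤
    ((Nat.card M : ℝ) * (Nat.card H : ℝ) * (Fintype.card G : ℝ) /
        ((Nat.card H : ℝ) - (Nat.card M : ℝ))) * ε :=
  avg_bhattacharyya_inducedChannel_le_general W hW0 H M hMH tH TM hTMsub hTM ε hε hZ
end

section
/- Let G be a finite abelian group of order q, H a subgroup of G, M a maximal proper subgroup of H, q̄ = |H|/|M|, T_H a transversal of H in G with fixed t_H ∈ T_H, T_M a transversal of M in H, and W̄ the induced channel on the cosets {t_H + t_M + M : t_M ∈ T_M}. Let d ∈ H \ M and ε ∈ [0,1]. If Z_d(W) > 1 − ε, then Z_d(W̄) > 1 − 2q(2ε − ε²)/(q̄·|M|), where Z_d(W̄) = (1/q̄)·Σ_{t_M∈T_M} Σ_{y∈Y} √( W̄(y | t_H + t_M + M) · W̄(y | t_H + t_M + d + M) ) and t_H + t_M + d + M denotes the coset of M (within t_H + H) containing t_H + t_M + d. -/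
open Finset

/-!
Averaging `W` over a coset of `M` is concave for the Bhattacharyya parameter: by Cauchy–Schwarz,
`Σ_y √(W̄(y|a) W̄(y|b)) ≥ (1/|M|) Σ_{m∈M} Σ_y √(W(y|a+m) W(y|b+m))`. Summing over a transversal
`T_M` of `M` in `H` thus bounds `|M| · Σ_{t∈T_M} Z(W̄_{t,t+d})` below by the sum of `Z(W_{x,x+d})`
over the coset `t_H + H`. Since every pairwise parameter is at most `1`, that coset sum loses at
most `q - |H|` against the full sum `q · Z_d(W) > q(1 - ε)`, so `|M| · q̄ · Z_d(W̄) > |H| - qε`,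
and `qε ≤ 2q(2ε - ε²)` for `ε ∈ [0, 1]`.
-/

lemma Real.sum_sqrt_mul_le_sqrt_mul_sum {ι : Type*} (s : Finset ι) {f g : ι → ℝ}
    (hf : ∀ i, 0 ≤ f i) (hg : ∀ i, 0 ≤ g i) :
    ∑ i ∈ s, √(f i * g i) ≤ √((∑ i ∈ s, f i) * ∑ i ∈ s, g i) := by
  simp_rw [Real.sqrt_mul (hf _), Real.sqrt_mul (sum_nonneg fun i _ => hf i)]
  exact Real.sum_sqrt_mul_sqrt_le s hf hg

lemma Finset.sum_le_sum_of_subset_add_card_sdiff {ι : Type*} [DecidableEq ι] {s t : Finset ι}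
    (hst : s ⊆ t) {f : ι → ℝ} (hf : ∀ i ∈ t \ s, f i ≤ 1) :
    ∑ i ∈ t, f i ≤ ∑ i ∈ s, f i + (#t - #s) := by
  rw [← sum_sdiff hst, ← Nat.cast_sub (card_le_card hst), ← card_sdiff_of_subset hst, add_comm]
  gcongr
  simpa using sum_le_card_nsmul (t \ s) f 1 hf

section Subgroup

variable {G : Type} [AddCommGroup G] [Fintype G]

lemma AddSubgroup.card_filter_mem (K : AddSubgroup G) [DecidablePred (· ∈ K)] :
    #(univ.filter (· ∈ K)) = Nat.card K := by
  rw [Nat.card_eq_fintype_card, Fintype.card_subtype]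

lemma AddSubgroup.sum_filter_mem_add_right {β : Type*} [AddCommMonoid β] (K : AddSubgroup G)
    [DecidablePred (· ∈ K)] (f : G → β) {δ : G} (hδ : δ ∈ K) :
    ∑ m ∈ univ.filter (· ∈ K), f (m + δ) = ∑ m ∈ univ.filter (· ∈ K), f m :=
  sum_equiv (Equiv.addRight δ) (by simp [K.add_mem_cancel_right hδ]) fun _ _ => rfl

lemma AddSubgroup.sum_eq_sum_transversal_sum {β : Type*} [AddCommMonoid β] {H M : AddSubgroup G}
    [DecidablePred (· ∈ H)] [DecidablePred (· ∈ M)] (hMH : M ≤ H) {T : Finset G}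
    (hTH : (T : Set G) ⊆ H) (hT : ∀ h ∈ H, ∃! t, t ∈ T ∧ h - t ∈ M) (f : G → β) :
    ∑ h ∈ univ.filter (· ∈ H), f h = ∑ t ∈ T, ∑ m ∈ univ.filter (· ∈ M), f (t + m) := by
  rw [← sum_product']
  symm
  refine sum_bij (fun p _ => p.1 + p.2) ?_ ?_ ?_ fun _ _ => rfl
  · rintro ⟨t, m⟩ hp
    simp only [mem_product, mem_filter, mem_univ, true_and] at hp ⊢
    exact H.add_mem (hTH hp.1) (hMH hp.2)
  · rintro ⟨t, m⟩ hp ⟨t', m'⟩ hp' (heq : t + m = t' + m')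
    simp only [mem_product, mem_filter, mem_univ, true_and] at hp hp'
    have htt' : t = t' := (hT _ (H.add_mem (hTH hp.1) (hMH hp.2))).unique
      ⟨hp.1, by simpa using hp.2⟩ ⟨hp'.1, by simpa [heq] using hp'.2⟩
    subst htt'
    simpa using heq
  · intro h hh
    simp only [mem_filter, mem_univ, true_and] at hh
    obtain ⟨t, ⟨ht, hm⟩, -⟩ := hT h hh
    exact ⟨(t, h - t), by simp [ht, hm], by simp⟩

end Subgroup

section Bhattacharyya

variable {G Y : Type} [Fintype Y] (W : G → Y → ℝ)

lemma Zpair_le_one (hW0 : ∀ x y, 0 ≤ W x y) (hW1 : ∀ x, ∑ y, W x y = 1) (x x' : G) :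
    Zpair W x x' ≤ 1 := by
  simpa [Zpair, hW1] using Real.sum_sqrt_mul_le_sqrt_mul_sum univ (hW0 x · ) (hW0 x' ·)

lemma Zpair_const_mul {k : ℝ} (hk : 0 ≤ k) (x x' : G) :
    Zpair (fun x y => k * W x y) x x' = k * Zpair W x x' := by
  simp only [Zpair, mul_sum]
  refine sum_congr rfl fun y _ => ?_
  rw [mul_mul_mul_comm, Real.sqrt_mul (mul_self_nonneg k), Real.sqrt_mul_self hk]

lemma sum_Zpair_le_Zpair_sum {ι : Type*} (hW0 : ∀ x y, 0 ≤ W x y) (s : Finset ι) (a b : ι → G) :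
    ∑ i ∈ s, Zpair W (a i) (b i) ≤
      ∑ y, √((∑ i ∈ s, W (a i) y) * ∑ i ∈ s, W (b i) y) := by
  simp only [Zpair]
  rw [sum_comm]
  exact sum_le_sum fun y _ =>
    Real.sum_sqrt_mul_le_sqrt_mul_sum s (fun i => hW0 (a i) y) (fun i => hW0 (b i) y)

end Bhattacharyya

section InducedChannel

variable {G Y : Type} [Fintype G] [AddCommGroup G] [DecidableEq G]
  (W : G → Y → ℝ) (tH : G) (M : AddSubgroup G) [DecidablePred (· ∈ M)]

lemma inducedChannel_eq_of_sub_mem {t t' : G} (h : t - t' ∈ M) :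
    inducedChannel W tH M t = inducedChannel W tH M t' := by
  funext y
  simp only [inducedChannel]
  rw [← M.sum_filter_mem_add_right (fun m => W (tH + t' + m) y) h]
  congr 1
  refine sum_congr rfl fun m _ => ?_
  abel_nf

lemma sum_Zpair_le_card_mul_Zpair_inducedChannel [Fintype Y] (hW0 : ∀ x y, 0 ≤ W x y)
    (t d : G) :
    ∑ m ∈ univ.filter (· ∈ M), Zpair W (tH + t + m) (tH + t + m + d) ≤
      Nat.card M * Zpair (inducedChannel W tH M) t (t + d) := by
  have hM : (0 : ℝ) < Nat.card M := by exact_mod_cast Nat.card_pos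
  unfold inducedChannel
  rw [Zpair_const_mul _ (by positivity), ← mul_assoc, mul_one_div_cancel hM.ne', one_mul]
  refine (sum_Zpair_le_Zpair_sum W hW0 _ _ _).trans_eq ?_
  simp only [Zpair, ← add_assoc, add_right_comm _ d]

lemma sum_Zpair_coset_le_card_mul_sum_Zpair_inducedChannel [Fintype Y] (hW0 : ∀ x y, 0 ≤ W x y)
    {H : AddSubgroup G} [DecidablePred (· ∈ H)] (hMH : M ≤ H) {TM : Finset G}
    (hTMsub : (TM : Set G) ⊆ H) (hTM : ∀ h ∈ H, ∃! t, t ∈ TM ∧ h - t ∈ M)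
    {ρ : G → G} (hρ : ∀ h ∈ H, ρ h ∈ TM ∧ h - ρ h ∈ M) {d : G} (hd : d ∈ H) :
    ∑ h ∈ univ.filter (· ∈ H), Zpair W (tH + h) (tH + h + d) ≤
      Nat.card M * ∑ t ∈ TM, Zpair (inducedChannel W tH M) t (ρ (t + d)) := by
  rw [AddSubgroup.sum_eq_sum_transversal_sum hMH hTMsub hTM, mul_sum]
  gcongr with t ht
  have hρt : ρ (t + d) - (t + d) ∈ M := by
    simpa using M.neg_mem (hρ _ (H.add_mem (hTMsub ht) hd)).2
  have hrep : Zpair (inducedChannel W tH M) t (ρ (t + d)) =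
      Zpair (inducedChannel W tH M) t (t + d) := by
    simp only [Zpair, inducedChannel_eq_of_sub_mem W tH M hρt]
  rw [hrep]
  simpa only [← add_assoc] using sum_Zpair_le_card_mul_Zpair_inducedChannel W tH M hW0 t d

end InducedChannel

theorem Zd_inducedChannel_gt_general
    {G Y : Type} [Fintype G] [AddCommGroup G] [DecidableEq G] [Fintype Y]
    (W : G → Y → ℝ) (hW0 : ∀ x y, 0 ≤ W x y) (hW1 : ∀ x, ∑ y, W x y = 1)
    (H M : AddSubgroup G) [DecidablePred (· ∈ M)]
    (hMH : M < H)
    (tH : G)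
    (TM : Finset G) (hTMsub : (TM : Set G) ⊆ (H : Set G))
    (hTM : ∀ h ∈ H, ∃! t, t ∈ TM ∧ h - t ∈ M)
    (ρ : G → G) (hρ : ∀ h ∈ H, ρ h ∈ TM ∧ h - ρ h ∈ M)
    (d : G) (hd : d ∈ (H : Set G) \ (M : Set G))
    (ε : ℝ) (hε : ε ∈ Set.Icc (0 : ℝ) 1)
    (hZ : Zd W d > 1 - ε) :
    (1 / ((Nat.card H : ℝ) / (Nat.card M : ℝ))) *
        ∑ t ∈ TM, Zpair (inducedChannel W tH M) t (ρ (t + d)) >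
      1 - 2 * (Fintype.card G : ℝ) * (2 * ε - ε ^ 2) /
          (((Nat.card H : ℝ) / (Nat.card M : ℝ)) * (Nat.card M : ℝ)) := by
  classical
  set q : ℝ := (Fintype.card G : ℝ)
  set S := ∑ t ∈ TM, Zpair (inducedChannel W tH M) t (ρ (t + d))
  have hq : 0 < q := Nat.cast_pos.mpr Fintype.card_pos
  have hH : (0 : ℝ) < Nat.card H := by exact_mod_cast Nat.card_pos
  have hM : (0 : ℝ) < Nat.card M := by exact_mod_cast Nat.card_pos
  have hsum : q * (1 - ε) < ∑ x, Zpair W x (x + d) := by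
    rwa [Zd, gt_iff_lt, one_div_mul_eq_div, lt_div_iff₀ hq, mul_comm] at hZ
  have hrestrict : ∑ x, Zpair W x (x + d) ≤
      ∑ h ∈ univ.filter (· ∈ H), Zpair W (tH + h) (tH + h + d) + (q - Nat.card H) := by
    have := sum_le_sum_of_subset_add_card_sdiff (subset_univ ((univ.filter (· ∈ H)).map
      (addLeftEmbedding tH))) (f := fun x => Zpair W x (x + d))
      fun x _ => Zpair_le_one W hW0 hW1 x (x + d)
    simpa [H.card_filter_mem] using this
  have hinduced := sum_Zpair_coset_le_card_mul_sum_Zpair_inducedChannel W tH M hW0 hMH.le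
    hTMsub hTM hρ hd.1
  have hqε : q * ε ≤ 2 * q * (2 * ε - ε ^ 2) := by
    nlinarith [mul_nonneg hq.le hε.1, mul_nonneg (mul_nonneg hq.le hε.1) (sub_nonneg.2 hε.2)]
  have hbound : Nat.card H - 2 * q * (2 * ε - ε ^ 2) < Nat.card M * S := by linarith
  rw [div_mul_cancel₀ _ hM.ne', one_div_div, gt_iff_lt, one_sub_div hH.ne', div_mul_eq_mul_div]
  exact div_lt_div_of_pos_right hbound hH

/-- `Z_d(W) > 1 − ε` with `d ∈ H \ M` implies
`Z_d(W̄) > 1 − 2q(2ε − ε²)/(q̄·|M|)` for the induced channel `W̄`, where `ρ` picks the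
representative in `T_M` of the coset of `M` (within `H`) containing its argument. -/
theorem Zd_inducedChannel_gt
    {G Y : Type} [Fintype G] [AddCommGroup G] [DecidableEq G] [Fintype Y]
    (W : G → Y → ℝ) (hW0 : ∀ x y, 0 ≤ W x y) (hW1 : ∀ x, ∑ y, W x y = 1)
    (H M : AddSubgroup G) [DecidablePred (· ∈ M)]
    (hMH : M < H)
    (hMmax : ∀ K : AddSubgroup G, M ≤ K → K ≤ H → K = M ∨ K = H)
    (TH : Finset G) (hTH : ∀ g : G, ∃! t, t ∈ TH ∧ g - t ∈ H) (tH : G) (htH : tH ∈ TH)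
    (TM : Finset G) (hTMsub : (TM : Set G) ⊆ (H : Set G))
    (hTM : ∀ h ∈ H, ∃! t, t ∈ TM ∧ h - t ∈ M)
    (ρ : G → G) (hρ : ∀ h ∈ H, ρ h ∈ TM ∧ h - ρ h ∈ M)
    (d : G) (hd : d ∈ (H : Set G) \ (M : Set G))
    (ε : ℝ) (hε : ε ∈ Set.Icc (0 : ℝ) 1)
    (hZ : Zd W d > 1 - ε) :
    (1 / ((Nat.card H : ℝ) / (Nat.card M : ℝ))) *
        ∑ t ∈ TM, Zpair (inducedChannel W tH M) t (ρ (t + d)) >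
      1 - 2 * (Fintype.card G : ℝ) * (2 * ε - ε ^ 2) /
          (((Nat.card H : ℝ) / (Nat.card M : ℝ)) * (Nat.card M : ℝ)) :=
  Zd_inducedChannel_gt_general W hW0 hW1 H M hMH tH TM hTMsub hTM ρ hρ d hd ε hε hZ
end
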